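/- Let G : ℝ^k → ℝ^n, G(z) = W^{(d)} σ(W^{(d-1)} ⋯ σ(W^{(1)} z)), be a ReLU network with layer widths k = k₀ ≤ k₁, …, k_{d-1}, k_d = n, where σ(t) = max(t,0) is applied componentwise. Then the range of G is contained in a union of at most N polyhedral convex cones, each of dimension at most k, where log N ≤ k(d−1) log(2e·k̄/k) with k̄ := (∏_{ℓ=1}^{d-1} k_ℓ)^{1/(d-1)}. -/

import Mathlib

/-- The ReLU network `z ↦ W^{(i+1)} σ(W^{(i)} ⋯ σ(W^{(1)} z))` (depth `i+1`). -/
def reluNet (kk : ℕ → ℕ) (W : ∀ i : ℕ, Matrix (Fin (kk (i + 1))) (Fin (kk i)) ℝ) :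
    (i : ℕ) → (Fin (kk 0) → ℝ) → (Fin (kk (i + 1)) → ℝ)
  | 0, z => (W 0).mulVec z
  | (i + 1), z => (W (i + 1)).mulVec (fun j => max (reluNet kk W i z j) 0)

/-!
On inputs with a fixed activation pattern the network is linear (`maskedNet`), so its range is
covered by the images of finitely many linear maps on `ℝ^k`: subspaces of dimension at most `k`,
which are polyhedral cones. Patterns are counted layer by layer: once the pattern of the first
`ℓ` hidden layers is fixed, the pattern of layer `ℓ + 1` is the sign pattern of `k_{ℓ+1}` linear
functionals on `ℝ^k`. A set of functionals shattered by such sign patterns is linearly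
independent, so their VC dimension is at most `k`, and Sauer–Shelah bounds their number by
`∑_{j ≤ k} (k_{ℓ+1} choose j) ≤ (e k_{ℓ+1} / k)^k`.
-/

open Finset

section SignPatterns

variable {ι E : Type*} [Fintype ι] [AddCommGroup E] [Module ℝ E]

open Classical in
noncomputable def signPatterns (f : ι → Module.Dual ℝ E) : Finset (Finset ι) :=
  {s | ∃ x, ({i | 0 < f i x} : Finset ι) = s}

variable {f : ι → Module.Dual ℝ E} {s : Finset ι}

lemma mem_signPatterns : s ∈ signPatterns f ↔ ∃ x, ({i | 0 < f i x} : Finset ι) = s := by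
  simp [signPatterns]

variable [DecidableEq ι]

/-- Evaluating the relation at a point whose sign pattern on `s` is `{i ∈ s | 0 < g i}` gives a
sum of nonnegative terms, one of them positive. -/
lemma nonpos_of_sum_smul_eq_zero_of_shatters (hs : (signPatterns f).Shatters s) {g : ι → ℝ}
    (hg : ∑ i ∈ s, g i • f i = 0) : ∀ i ∈ s, g i ≤ 0 := by
  by_contra! ⟨i₀, hi₀, hgi₀⟩
  obtain ⟨u, hu, hsu⟩ := hs (filter_subset (fun i => 0 < g i) s)
  obtain ⟨x, rfl⟩ := mem_signPatterns.1 hu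
  have hsign : ∀ i ∈ s, (0 < g i ↔ 0 < f i x) := fun i hi => by
    simpa [hi] using (congrArg (i ∈ ·) hsu).symm
  have hsum : 0 < ∑ i ∈ s, g i * f i x := by
    refine sum_pos' (fun i hi => ?_) ⟨i₀, hi₀, mul_pos hgi₀ ((hsign i₀ hi₀).1 hgi₀)⟩
    by_cases hgi : 0 < g i
    · exact (mul_pos hgi ((hsign i hi).1 hgi)).le
    · exact mul_nonneg_of_nonpos_of_nonpos (not_lt.1 hgi) (not_lt.1 (mt (hsign i hi).2 hgi))
  have hzero : ∑ i ∈ s, g i * f i x = 0 := by simpa using congrArg (· x) hg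
  exact hsum.ne' hzero

lemma linearIndepOn_of_shatters_signPatterns (hs : (signPatterns f).Shatters s) :
    LinearIndepOn ℝ f (s : Set ι) := by
  refine linearIndepOn_finset_iff.2 fun g hg i hi =>
    le_antisymm (nonpos_of_sum_smul_eq_zero_of_shatters hs hg i hi) ?_
  have hneg : ∑ i ∈ s, (-g) i • f i = 0 := by
    simp only [Pi.neg_apply]
    rw [sum_congr rfl fun i _ => neg_smul (g i) (f i), sum_neg_distrib, hg, neg_zero]
  simpa using nonpos_of_sum_smul_eq_zero_of_shatters hs hneg i hi

variable [FiniteDimensional ℝ E]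

lemma vcDim_signPatterns_le (f : ι → Module.Dual ℝ E) :
    (signPatterns f).vcDim ≤ Module.finrank ℝ E := by
  refine Finset.sup_le fun s hs => ?_
  rw [← Subspace.dual_finrank_eq]
  simpa using
    (linearIndepOn_of_shatters_signPatterns (mem_shatterer.1 hs)).fintype_card_le_finrank

lemma card_signPatterns_le (f : ι → Module.Dual ℝ E) :
    #(signPatterns f) ≤ ∑ j ∈ Iic (Module.finrank ℝ E), (Fintype.card ι).choose j :=
  (card_le_card_shatterer _).trans <| card_shatterer_le_sum_vcDim.trans <|
    sum_le_sum_of_subset (Iic_subset_Iic.2 (vcDim_signPatterns_le f))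

end SignPatterns

lemma Submodule.exists_coe_eq_setOf_forall_nonneg {E : Type*} [AddCommGroup E] [Module ℝ E]
    (V : Submodule ℝ E) [FiniteDimensional ℝ (E ⧸ V)] :
    ∃ (M : ℕ) (φ : Fin M → Module.Dual ℝ E), (V : Set E) = {x | ∀ m, 0 ≤ φ m x} := by
  let e := (Module.finBasis ℝ (E ⧸ V)).equivFun
  let g : Fin (Module.finrank ℝ (E ⧸ V)) → Module.Dual ℝ E :=
    fun i => LinearMap.proj i ∘ₗ e.toLinearMap ∘ₗ V.mkQ
  refine ⟨_, Fin.append g (-g), Set.ext fun x => ?_⟩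
  have hx : x ∈ V ↔ ∀ i, g i x = 0 := by
    rw [← Submodule.Quotient.mk_eq_zero, ← e.map_eq_zero_iff, funext_iff]
    rfl
  simp only [SetLike.mem_coe, Set.mem_ofPred_eq, hx, Fin.forall_fin_add, Fin.append_left,
    Fin.append_right, Pi.neg_apply, LinearMap.neg_apply, neg_nonneg, ← forall_and]
  exact forall_congr' fun i => le_antisymm_iff.trans and_comm

lemma sum_choose_le_exp_mul_div_pow {m r : ℕ} (hr : 1 ≤ r) (hrm : r ≤ m) :
    ((∑ j ∈ Iic r, m.choose j : ℕ) : ℝ) ≤ (Real.exp 1 * m / r) ^ r := by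
  have hm : (0 : ℝ) < m := by exact_mod_cast hr.trans hrm
  set x : ℝ := r / m with hx
  have hx0 : 0 < x := by positivity
  have hx1 : x ≤ 1 := div_le_one_of_le₀ (by exact_mod_cast hrm) hm.le
  have key : ((∑ j ∈ Iic r, m.choose j : ℕ) : ℝ) * x ^ r ≤ Real.exp 1 ^ r :=
    calc ((∑ j ∈ Iic r, m.choose j : ℕ) : ℝ) * x ^ r
        ≤ ∑ j ∈ Iic r, (m.choose j : ℝ) * x ^ j := by
          push_cast
          rw [sum_mul]
          exact sum_le_sum fun j hj => mul_le_mul_of_nonneg_left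
            (pow_le_pow_of_le_one hx0.le hx1 (mem_Iic.1 hj)) (by positivity)
      _ ≤ ∑ j ∈ range (m + 1), (m.choose j : ℝ) * x ^ j :=
          sum_le_sum_of_subset_of_nonneg (fun j hj => by simp at hj ⊢; omega)
            fun _ _ _ => by positivity
      _ = (x + 1) ^ m := by
          rw [add_pow]; exact sum_congr rfl fun j _ => by ring
      _ ≤ Real.exp x ^ m := by gcongr; linarith [Real.add_one_le_exp x]
      _ = Real.exp 1 ^ r := by
          rw [← Real.exp_nat_mul, ← Real.exp_nat_mul, hx]; field_simp
  calc ((∑ j ∈ Iic r, m.choose j : ℕ) : ℝ) ≤ Real.exp 1 ^ r / x ^ r :=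
        (le_div_iff₀ (by positivity)).2 key
    _ = (Real.exp 1 * m / r) ^ r := by rw [← div_pow, hx, div_div_eq_mul_div]

lemma sum_log_mul_eq_card_mul_log {ι : Type*} (s : Finset ι) {c : ℝ} (hc : 0 < c) {a : ι → ℝ}
    (ha : ∀ i ∈ s, 0 < a i) :
    ∑ i ∈ s, Real.log (c * a i) = #s * Real.log (c * (∏ i ∈ s, a i) ^ ((1 : ℝ) / #s)) := by
  rcases s.eq_empty_or_nonempty with rfl | hs
  · simp
  have hP : 0 < ∏ i ∈ s, a i := prod_pos ha
  rw [Real.log_mul hc.ne' (Real.rpow_pos_of_pos hP _).ne', Real.log_rpow hP,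
    Real.log_prod fun i hi => (ha i hi).ne',
    sum_congr rfl fun i hi => Real.log_mul hc.ne' (ha i hi).ne', sum_add_distrib,
    sum_const, nsmul_eq_mul]
  have : (#s : ℝ) ≠ 0 := by exact_mod_cast hs.card_pos.ne'
  field_simp

open Matrix in
lemma relu_eq_diagonal_mulVec {n : Type*} [Fintype n] [DecidableEq n] (v : n → ℝ) :
    (fun j => max (v j) 0) = Matrix.diagonal (fun j => if 0 < v j then 1 else 0) *ᵥ v := by
  ext j
  rw [Matrix.mulVec_diagonal]
  split_ifs with h
  · simp [h.le]
  · simp [not_lt.1 h]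

section ReluNet

open Matrix

variable (kk : ℕ → ℕ) (W : ∀ i : ℕ, Matrix (Fin (kk (i + 1))) (Fin (kk i)) ℝ)

/-- `ε i` is the set of neurons of hidden layer `i + 1` (the output of `reluNet kk W i`) that pass
through the ReLU. -/
abbrev ActivationPrefix (ℓ : ℕ) := ∀ i : Fin ℓ, Finset (Fin (kk (i + 1)))

noncomputable def activeNeurons (i : ℕ) (z : Fin (kk 0) → ℝ) : Finset (Fin (kk (i + 1))) :=
  {j | 0 < reluNet kk W i z j}

noncomputable def activationPrefix (ℓ : ℕ) (z : Fin (kk 0) → ℝ) : ActivationPrefix kk ℓ :=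
  fun i => activeNeurons kk W i z

lemma init_activationPrefix (ℓ : ℕ) (z : Fin (kk 0) → ℝ) :
    Fin.init (activationPrefix kk W (ℓ + 1) z) = activationPrefix kk W ℓ z :=
  rfl

noncomputable def maskedNet :
    (ℓ : ℕ) → ActivationPrefix kk ℓ → Matrix (Fin (kk (ℓ + 1))) (Fin (kk 0)) ℝ
  | 0, _ => W 0
  | ℓ + 1, ε =>
      W (ℓ + 1) *
        diagonal (fun j : Fin (kk (ℓ + 1)) => if j ∈ ε (Fin.last ℓ) then (1 : ℝ) else 0) *
        maskedNet ℓ (Fin.init ε)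

lemma reluNet_eq_maskedNet_mulVec (ℓ : ℕ) (z : Fin (kk 0) → ℝ) :
    reluNet kk W ℓ z = maskedNet kk W ℓ (activationPrefix kk W ℓ z) *ᵥ z := by
  induction ℓ with
  | zero => rfl
  | succ ℓ ih =>
    rw [reluNet, relu_eq_diagonal_mulVec, maskedNet, ← Matrix.mulVec_mulVec,
      ← Matrix.mulVec_mulVec, init_activationPrefix, ← ih]
    simp [activationPrefix, activeNeurons]

open Classical in
noncomputable def realizedPrefixes (ℓ : ℕ) : Finset (ActivationPrefix kk ℓ) :=
  {ε | ∃ z, activationPrefix kk W ℓ z = ε}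

lemma mem_realizedPrefixes {ℓ : ℕ} {ε : ActivationPrefix kk ℓ} :
    ε ∈ realizedPrefixes kk W ℓ ↔ ∃ z, activationPrefix kk W ℓ z = ε := by
  simp [realizedPrefixes]

lemma realizedPrefixes_succ_subset (ℓ : ℕ) :
    realizedPrefixes kk W (ℓ + 1) ⊆ (realizedPrefixes kk W ℓ).biUnion fun ε =>
      (signPatterns fun j => LinearMap.proj j ∘ₗ (maskedNet kk W ℓ ε).mulVecLin).image
        (Fin.snoc ε) := by
  intro ε hε
  obtain ⟨z, rfl⟩ := (mem_realizedPrefixes kk W).1 hε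
  refine mem_biUnion.2 ⟨activationPrefix kk W ℓ z, (mem_realizedPrefixes kk W).2 ⟨z, rfl⟩,
    mem_image.2 ⟨activeNeurons kk W ℓ z, mem_signPatterns.2 ⟨z, ?_⟩,
      Fin.snoc_init_self (activationPrefix kk W (ℓ + 1) z)⟩⟩
  rw [activeNeurons, reluNet_eq_maskedNet_mulVec]
  rfl

lemma card_realizedPrefixes_le (ℓ : ℕ) :
    #(realizedPrefixes kk W ℓ) ≤ ∏ i ∈ Icc 1 ℓ, ∑ j ∈ Iic (kk 0), (kk i).choose j := by
  induction ℓ with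
  | zero => simpa using card_le_one_of_subsingleton (realizedPrefixes kk W 0)
  | succ ℓ ih =>
    rw [prod_Icc_succ_top (by omega)]
    calc #(realizedPrefixes kk W (ℓ + 1))
        ≤ ∑ ε ∈ realizedPrefixes kk W ℓ,
            #(signPatterns fun j => LinearMap.proj j ∘ₗ (maskedNet kk W ℓ ε).mulVecLin) :=
          (card_le_card (realizedPrefixes_succ_subset kk W ℓ)).trans <|
            card_biUnion_le.trans <| sum_le_sum fun _ _ => card_image_le
      _ ≤ ∑ _ε ∈ realizedPrefixes kk W ℓ, ∑ j ∈ Iic (kk 0), (kk (ℓ + 1)).choose j :=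
          sum_le_sum fun _ _ => (card_signPatterns_le _).trans (by simp)
      _ ≤ _ := by
          rw [sum_const, smul_eq_mul]
          exact Nat.mul_le_mul_right _ ih

lemma log_card_realizedPrefixes_le {k ℓ : ℕ} (hk : 1 ≤ k) (hk0 : kk 0 = k)
    (hkw : ∀ i ∈ Icc 1 ℓ, k ≤ kk i) :
    Real.log #(realizedPrefixes kk W ℓ) ≤
      k * ℓ * Real.log (2 * Real.exp 1 * (∏ i ∈ Icc 1 ℓ, (kk i : ℝ)) ^ ((1 : ℝ) / ℓ) / k) := by
  have hkpos : (0 : ℝ) < k := by exact_mod_cast hk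
  have hc : 0 < 2 * Real.exp 1 / k := by positivity
  have hwidth : ∀ i ∈ Icc 1 ℓ, (0 : ℝ) < kk i := fun i hi => by
    exact_mod_cast hk.trans (hkw i hi)
  have hcard_pos : 0 < #(realizedPrefixes kk W ℓ) :=
    card_pos.2 ⟨_, (mem_realizedPrefixes kk W).2 ⟨0, rfl⟩⟩
  have hcard :
      (#(realizedPrefixes kk W ℓ) : ℝ) ≤ ∏ i ∈ Icc 1 ℓ, (2 * Real.exp 1 / k * kk i) ^ k :=
    calc (#(realizedPrefixes kk W ℓ) : ℝ)
        ≤ ∏ i ∈ Icc 1 ℓ, ((∑ j ∈ Iic k, (kk i).choose j : ℕ) : ℝ) := by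
          exact_mod_cast hk0 ▸ card_realizedPrefixes_le kk W ℓ
      _ ≤ ∏ i ∈ Icc 1 ℓ, (2 * Real.exp 1 / k * kk i) ^ k := by
          refine prod_le_prod (fun _ _ => by positivity) fun i hi =>
            (sum_choose_le_exp_mul_div_pow hk (hkw i hi)).trans ?_
          have := hwidth i hi
          gcongr
          rw [div_mul_eq_mul_div]
          gcongr
          linarith [Real.exp_pos 1]
  calc Real.log #(realizedPrefixes kk W ℓ)
      ≤ Real.log (∏ i ∈ Icc 1 ℓ, (2 * Real.exp 1 / k * kk i) ^ k) :=
        Real.log_le_log (by exact_mod_cast hcard_pos) hcard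
    _ = k * ∑ i ∈ Icc 1 ℓ, Real.log (2 * Real.exp 1 / k * kk i) := by
        rw [Real.log_prod fun i hi => (pow_pos (mul_pos hc (hwidth i hi)) k).ne', mul_sum]
        simp only [Real.log_pow]
    _ = _ := by
        rw [sum_log_mul_eq_card_mul_log _ hc hwidth, Nat.card_Icc, Nat.add_sub_cancel,
          mul_div_right_comm (2 * Real.exp 1), mul_assoc]

end ReluNet

theorem stmt9 (k : ℕ) (hk2 : 2 ≤ k) (d' : ℕ) (kk : ℕ → ℕ) (hk0 : kk 0 = k)
    (hkw : ∀ ℓ, 1 ≤ ℓ → ℓ ≤ d' + 1 → k ≤ kk ℓ)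
    (W : ∀ i : ℕ, Matrix (Fin (kk (i + 1))) (Fin (kk i)) ℝ) :
    ∃ (N : ℕ) (𝒞 : Fin N → Set (Fin (kk (d' + 1)) → ℝ)),
      Set.range (reluNet kk W d') ⊆ (⋃ i, 𝒞 i) ∧
      (∀ i, Convex ℝ (𝒞 i)) ∧
      (∀ i, ∀ x ∈ 𝒞 i, ∀ t : ℝ, 0 ≤ t → t • x ∈ 𝒞 i) ∧
      (∀ i, ∃ (M : ℕ) (φ : Fin M → ((Fin (kk (d' + 1)) → ℝ) →ₗ[ℝ] ℝ)),
        𝒞 i = {x | ∀ m, 0 ≤ φ m x}) ∧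
      (∀ i, ∃ V : Submodule ℝ (Fin (kk (d' + 1)) → ℝ),
        𝒞 i ⊆ (V : Set (Fin (kk (d' + 1)) → ℝ)) ∧ Module.finrank ℝ V ≤ k) ∧
      Real.log N ≤ (k : ℝ) * d' *
        Real.log (2 * Real.exp 1 *
          ((∏ ℓ ∈ Finset.Icc 1 d', (kk ℓ : ℝ)) ^ ((1 : ℝ) / d')) / k) := by
  set P := realizedPrefixes kk W d'
  let cone : Fin #P → Submodule ℝ (Fin (kk (d' + 1)) → ℝ) :=
    fun i => LinearMap.range (maskedNet kk W d' (P.equivFin.symm i)).mulVecLin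
  refine ⟨#P, fun i => cone i, ?_, fun i => (cone i).convex,
    fun i _ hx t _ => (cone i).smul_mem t hx, fun i => (cone i).exists_coe_eq_setOf_forall_nonneg,
    fun i => ⟨cone i, subset_rfl, ?_⟩,
    log_card_realizedPrefixes_le kk W (by omega) hk0 fun i hi => by
      simp only [mem_Icc] at hi; exact hkw i hi.1 (by omega)⟩
  · rintro _ ⟨z, rfl⟩
    have hz : activationPrefix kk W d' z ∈ P := (mem_realizedPrefixes kk W).2 ⟨z, rfl⟩
    refine Set.mem_iUnion.2 ⟨P.equivFin ⟨_, hz⟩, ?_⟩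
    simp only [cone, Equiv.symm_apply_apply, reluNet_eq_maskedNet_mulVec]
    exact LinearMap.mem_range_self _ z
  · exact (LinearMap.finrank_range_le _).trans (by simp [hk0])
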